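/- Let f ∈ L_p[0,1] (1 ≤ p < ∞) be self-similar of zero spectral order with d_{k̂} = 1 and β_{k̂} ≠ 0, and singular point x̂ = α_{k̂}/(1−a_{k̂}). Then f tends essentially to sign(β_{k̂})·(+∞) at x̂: for every M > 0 there is δ > 0 such that sign(β_{k̂})·f(x) > M for almost every x ∈ [0,1] with 0 < |x − x̂| < δ. -/

import Mathlib

open MeasureTheory Set Filter
open scoped ENNReal NNReal

/-- Breakpoints: `alphaOf a k = α_k = ∑_{i=1}^{k-1} a_i`, so `α_1 = 0`. -/
noncomputable def alphaOf (a : ℕ → ℝ) (k : ℕ) : ℝ := ∑ i ∈ Finset.Ico 1 k, a i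

/-- The similarity operator `G`: on `(α_k, α_{k+1})` it takes the value
`β_k + d_k · f((x − α_k)/a_k)`, and `0` outside `⋃ (α_k, α_{k+1})`. -/
noncomputable def simOp (n : ℕ) (a d β : ℕ → ℝ) (f : ℝ → ℝ) : ℝ → ℝ :=
  fun x => ∑ k ∈ Finset.Icc 1 n,
    Set.indicator (Set.Ioo (alphaOf a k) (alphaOf a (k + 1)))
      (fun y => β k + d k * f ((y - alphaOf a k) / a k)) x

/-!
Let `ψ y = α_k̂ + a_k̂ y`, the homothety of ratio `a_k̂` centred at `x̂`. Off a null set, the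
fixed-point equation reads `f (ψ y) = β_k̂ + f y` for `y ∈ (0, 1)` and `f = β_j` on every other
interval `(α_j, α_{j+1})`; the exceptional set is the `ψ`-orbit of the points where the equation
fails and of the breakpoints, which is still null because `ψ` only rescales Lebesgue measure.
A point `x ≠ x̂` of `[0, 1]` can be pulled back by `ψ` only finitely often, since `ψ⁻¹` expands
distances to `x̂`, so the descent ends in an interval with `j ≠ k̂`. Hence
`sign β_k̂ · f ≥ m |β_k̂| - ∑ |β_j|` a.e. on `ψ^m [0, 1]`, and `ψ^m [0, 1]` contains a punctured
neighbourhood of `x̂` in `[0, 1]`.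
-/

open Topology AffineMap

section Breakpoints

theorem alphaOf_zero (a : ℕ → ℝ) : alphaOf a 0 = 0 := by simp [alphaOf]

theorem alphaOf_one (a : ℕ → ℝ) : alphaOf a 1 = 0 := by simp [alphaOf]

theorem alphaOf_succ (a : ℕ → ℝ) {k : ℕ} (hk : 1 ≤ k) : alphaOf a (k + 1) = alphaOf a k + a k :=
  Finset.sum_Ico_succ_top hk a

theorem alphaOf_succ_eq_sum (a : ℕ → ℝ) (n : ℕ) :
    alphaOf a (n + 1) = ∑ k ∈ Finset.Icc 1 n, a k := by
  rw [alphaOf, Finset.Ico_add_one_right_eq_Icc]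

variable {a : ℕ → ℝ} {n : ℕ}

theorem alphaOf_le_alphaOf (ha : ∀ k ∈ Finset.Icc 1 n, 0 ≤ a k) {i j : ℕ} (hij : i ≤ j)
    (hj : j ≤ n + 1) : alphaOf a i ≤ alphaOf a j := by
  refine Finset.sum_le_sum_of_subset_of_nonneg (Finset.Ico_subset_Ico le_rfl hij) ?_
  intro k hk _
  have hk' := Finset.mem_Ico.mp hk
  exact ha k (Finset.mem_Icc.mpr ⟨hk'.1, by omega⟩)

theorem alphaOf_mem_Icc (ha : ∀ k ∈ Finset.Icc 1 n, 0 ≤ a k)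
    (hsum : ∑ k ∈ Finset.Icc 1 n, a k = 1) {k : ℕ} (hk : k ≤ n + 1) :
    alphaOf a k ∈ Icc (0 : ℝ) 1 := by
  refine ⟨?_, ?_⟩
  · simpa [alphaOf_zero] using alphaOf_le_alphaOf ha (Nat.zero_le k) hk
  · simpa [alphaOf_succ_eq_sum, hsum] using alphaOf_le_alphaOf ha hk le_rfl

theorem mem_Ioo_of_notMem_range_alphaOf (hsum : ∑ k ∈ Finset.Icc 1 n, a k = 1) {x : ℝ}
    (hx : x ∈ Icc (0 : ℝ) 1) (hxα : x ∉ range (alphaOf a)) : x ∈ Ioo (0 : ℝ) 1 := by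
  refine ⟨hx.1.lt_of_ne ?_, hx.2.lt_of_ne ?_⟩
  · exact fun h => hxα ⟨1, (alphaOf_one a).trans h⟩
  · exact fun h => hxα ⟨n + 1, (alphaOf_succ_eq_sum a n).trans (hsum.trans h.symm)⟩

theorem exists_mem_Ioo_alphaOf (hsum : ∑ k ∈ Finset.Icc 1 n, a k = 1) {x : ℝ}
    (hx : x ∈ Icc (0 : ℝ) 1) (hxα : x ∉ range (alphaOf a)) :
    ∃ k ∈ Finset.Icc 1 n, x ∈ Ioo (alphaOf a k) (alphaOf a (k + 1)) := by
  classical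
  have hx' := mem_Ioo_of_notMem_range_alphaOf hsum hx hxα
  have hex : ∃ m, x < alphaOf a m := ⟨n + 1, by rw [alphaOf_succ_eq_sum, hsum]; exact hx'.2⟩
  -- the first breakpoint beyond `x` closes the interval containing `x`
  set m := Nat.find hex
  have hm : x < alphaOf a m := Nat.find_spec hex
  have hm0 : m ≠ 0 := fun h => by rw [h, alphaOf_zero] at hm; linarith [hx'.1]
  have hm1 : m ≠ 1 := fun h => by rw [h, alphaOf_one] at hm; linarith [hx'.1]
  have hmn : m ≤ n + 1 := Nat.find_min' hex (by rw [alphaOf_succ_eq_sum, hsum]; exact hx'.2)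
  have hle : alphaOf a (m - 1) ≤ x := not_lt.mp (Nat.find_min hex (by omega))
  refine ⟨m - 1, Finset.mem_Icc.mpr ⟨by omega, by omega⟩,
    hle.lt_of_ne fun h => hxα ⟨_, h⟩, ?_⟩
  rwa [Nat.sub_add_cancel (by omega)]

theorem alphaOf_div_one_sub_mem_Icc (ha : ∀ k ∈ Finset.Icc 1 n, 0 ≤ a k)
    (hsum : ∑ k ∈ Finset.Icc 1 n, a k = 1) {k : ℕ} (hk : k ∈ Finset.Icc 1 n) (hak : a k < 1) :
    alphaOf a k / (1 - a k) ∈ Icc (0 : ℝ) 1 := by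
  have hk' := Finset.mem_Icc.mp hk
  have hα := alphaOf_mem_Icc ha hsum (k := k) (by omega)
  have hα' := alphaOf_mem_Icc ha hsum (k := k + 1) (by omega)
  rw [alphaOf_succ a hk'.1] at hα'
  rw [mem_Icc, div_le_one (sub_pos.mpr hak)]
  exact ⟨div_nonneg hα.1 (sub_pos.mpr hak).le, by linarith [hα'.2]⟩

end Breakpoints

theorem AffineMap.homothety_iterate {k V P : Type*} [CommRing k] [AddCommGroup V] [Module k V]
    [AddTorsor V P] (c : P) (r : k) (m : ℕ) : (⇑(homothety c r))^[m] = homothety c (r ^ m) := by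
  induction m with
  | zero => simp
  | succ m ih =>
    funext p
    rw [Function.iterate_succ_apply', ih, pow_succ', homothety_mul_apply]

theorem Set.mapsTo_iUnion_image_iterate {α : Type*} (φ : α → α) (S : Set α) :
    MapsTo φ (⋃ m, φ^[m] '' S) (⋃ m, φ^[m] '' S) := by
  rintro _ ⟨_, ⟨m, rfl⟩, y, hy, rfl⟩
  exact mem_iUnion.mpr ⟨m + 1, y, hy, Function.iterate_succ_apply' φ m y⟩

theorem MeasureTheory.Measure.addHaar_iUnion_image_homothety_iterate_null {E : Type*}
    [NormedAddCommGroup E] [NormedSpace ℝ E] [MeasurableSpace E] [BorelSpace E]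
    [FiniteDimensional ℝ E]
    (μ : Measure E) [μ.IsAddHaarMeasure] (c : E) (r : ℝ) {S : Set E} (hS : μ S = 0) :
    μ (⋃ m, (⇑(homothety c r))^[m] '' S) = 0 :=
  measure_iUnion_null fun m => by
    rw [homothety_iterate, Measure.addHaar_image_homothety, hS, mul_zero]

theorem mapsTo_homothety_Icc {c r : ℝ} (hc : c ∈ Icc (0 : ℝ) 1) (hr0 : 0 ≤ r) (hr1 : r ≤ 1) :
    MapsTo (homothety c r) (Icc 0 1) (Icc 0 1) := by
  intro y hy
  simp only [homothety_apply, smul_eq_mul, vsub_eq_sub, vadd_eq_add, mem_Icc] at hy hc ⊢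
  constructor <;> nlinarith [mul_nonneg hr0 hy.1, mul_nonneg (sub_nonneg.mpr hr1) hc.1,
    mul_nonneg hr0 (sub_nonneg.mpr hy.2), mul_nonneg (sub_nonneg.mpr hr1) (sub_nonneg.mpr hc.2)]

theorem eventually_exists_homothety_eq {c r : ℝ} (hc : c ∈ Icc (0 : ℝ) 1) (hr : 0 < r) :
    ∀ᶠ x in 𝓝 c, x ∈ Icc (0 : ℝ) 1 → ∃ y ∈ Icc (0 : ℝ) 1, homothety c r y = x := by
  -- `g` inverts the homothety: near an interior `c` continuity keeps `g x` in `[0, 1]`, and at an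
  -- endpoint `c` the map `g` preserves the side of `c`
  set g : ℝ → ℝ := fun x => c + (x - c) / r
  have hg : Tendsto g (𝓝 c) (𝓝 c) := by
    have := (((continuous_id.sub (continuous_const (y := c))).div_const r).const_add c).tendsto c
    simpa [g] using this
  have hlow : ∀ᶠ x in 𝓝 c, 0 ≤ x → 0 ≤ g x := by
    rcases hc.1.eq_or_lt with rfl | hc0
    · exact Eventually.of_forall fun x hx => by simp only [g]; positivity
    · exact (hg.eventually_const_lt hc0).mono fun x hx _ => hx.le
  have hup : ∀ᶠ x in 𝓝 c, x ≤ 1 → g x ≤ 1 := by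
    rcases hc.2.eq_or_lt with rfl | hc1
    · exact Eventually.of_forall fun x hx => by
        simp only [g]; linarith [div_nonpos_of_nonpos_of_nonneg (sub_nonpos.mpr hx) hr.le]
    · exact (hg.eventually_lt_const hc1).mono fun x hx _ => hx.le
  filter_upwards [hlow, hup] with x hxl hxu hx
  refine ⟨g x, ⟨hxl hx.1, hxu hx.2⟩, ?_⟩
  simp only [g, homothety_apply, smul_eq_mul, vsub_eq_sub, vadd_eq_add]
  field_simp
  ring

section Escape

variable {c r b C : ℝ} {g : ℝ → ℝ} {B : Set ℝ}

theorem neg_le_of_homothety_escape (hc : c ∈ Icc (0 : ℝ) 1) (hr0 : 0 < r) (hr1 : r < 1)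
    (hb : 0 ≤ b) (hcB : c ∈ B) (hB : MapsTo (homothety c r) B B)
    (hstep : ∀ y ∈ Icc (0 : ℝ) 1, homothety c r y ∉ B → g (homothety c r y) = b + g y)
    (hbase : ∀ x ∈ Icc (0 : ℝ) 1 \ B, -C ≤ g x ∨ ∃ y ∈ Icc (0 : ℝ) 1, homothety c r y = x)
    {x : ℝ} (hx : x ∈ Icc (0 : ℝ) 1 \ B) : -C ≤ g x := by
  -- descend along preimages, which move away from `c` by the factor `r⁻¹`
  suffices h : ∀ K : ℕ, ∀ x ∈ Icc (0 : ℝ) 1 \ B, r ^ K < |x - c| → -C ≤ g x by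
    have hxc : 0 < |x - c| := abs_pos.mpr (sub_ne_zero.mpr fun h => hx.2 (h ▸ hcB))
    obtain ⟨K, hK⟩ := exists_pow_lt_of_lt_one hxc hr1
    exact h K x hx hK
  intro K
  induction K with
  | zero =>
    intro x hx hlt
    have : |x - c| ≤ 1 :=
      abs_sub_le_iff.mpr ⟨by linarith [hx.1.2, hc.1], by linarith [hx.1.1, hc.2]⟩
    rw [pow_zero] at hlt
    linarith
  | succ K ih =>
    intro x hx hlt
    rcases hbase x hx with h | ⟨y, hy, rfl⟩
    · exact h
    have hyB : y ∉ B := fun h => hx.2 (hB h)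
    have hdist : |homothety c r y - c| = r * |y - c| := by
      rw [homothety_apply, smul_eq_mul, vsub_eq_sub, vadd_eq_add, add_sub_cancel_right,
        abs_mul, abs_of_pos hr0]
    have hy' : r ^ K < |y - c| := by
      rw [hdist, pow_succ'] at hlt
      exact lt_of_mul_lt_mul_left hlt hr0.le
    rw [hstep y hy hx.2]
    linarith [ih y ⟨hy, hyB⟩ hy']

theorem le_apply_homothety_iterate_of_escape (hc : c ∈ Icc (0 : ℝ) 1) (hr0 : 0 < r)
    (hr1 : r < 1) (hb : 0 ≤ b) (hcB : c ∈ B) (hB : MapsTo (homothety c r) B B)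
    (hstep : ∀ y ∈ Icc (0 : ℝ) 1, homothety c r y ∉ B → g (homothety c r y) = b + g y)
    (hbase : ∀ x ∈ Icc (0 : ℝ) 1 \ B, -C ≤ g x ∨ ∃ y ∈ Icc (0 : ℝ) 1, homothety c r y = x)
    (m : ℕ) {y : ℝ} (hy : y ∈ Icc (0 : ℝ) 1) (hyB : (⇑(homothety c r))^[m] y ∉ B) :
    m * b - C ≤ g ((⇑(homothety c r))^[m] y) := by
  induction m with
  | zero =>
    simpa using neg_le_of_homothety_escape hc hr0 hr1 hb hcB hB hstep hbase ⟨hy, hyB⟩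
  | succ m ih =>
    rw [Function.iterate_succ_apply'] at hyB ⊢
    have hz := (mapsTo_homothety_Icc hc hr0.le hr1.le).iterate m hy
    rw [hstep _ hz hyB]
    push_cast
    linarith [ih fun h => hyB (hB h)]

end Escape

theorem exists_ae_lt_of_homothety_escape {c r b C : ℝ} {g : ℝ → ℝ} {E : Set ℝ}
    (hc : c ∈ Icc (0 : ℝ) 1) (hr0 : 0 < r) (hr1 : r < 1) (hb : 0 < b) (hE : volume E = 0)
    (hstep : ∀ y ∈ Icc (0 : ℝ) 1 \ E, homothety c r y ∉ E → g (homothety c r y) = b + g y)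
    (hbase : ∀ x ∈ Icc (0 : ℝ) 1 \ E, -C ≤ g x ∨ ∃ y ∈ Icc (0 : ℝ) 1, homothety c r y = x)
    (M : ℝ) : ∃ δ > 0, ∀ᵐ x, x ∈ Icc (0 : ℝ) 1 → |x - c| < δ → M < g x := by
  set B := ⋃ m, (⇑(homothety c r))^[m] '' insert c E
  have hB : MapsTo (homothety c r) B B := mapsTo_iUnion_image_iterate _ _
  have hEB : insert c E ⊆ B := fun x hx => mem_iUnion.mpr ⟨0, x, hx, rfl⟩
  have hBnull : volume B = 0 :=
    Measure.addHaar_iUnion_image_homothety_iterate_null volume c r <| by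
      rw [insert_eq]; exact measure_union_null (measure_singleton c) hE
  have hnotE : ∀ {x}, x ∉ B → x ∉ E := fun hx h => hx (hEB (mem_insert_of_mem c h))
  obtain ⟨m, hm⟩ := exists_nat_gt ((M + C) / b)
  obtain ⟨δ, hδ, hball⟩ :=
    Metric.eventually_nhds_iff.mp (eventually_exists_homothety_eq hc (pow_pos hr0 m))
  refine ⟨δ, hδ, ?_⟩
  filter_upwards [measure_eq_zero_iff_ae_notMem.mp hBnull] with x hxB hx hxδ
  obtain ⟨y, hy, rfl⟩ := hball (by rwa [Real.dist_eq]) hx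
  rw [← homothety_iterate] at hxB ⊢
  have := le_apply_homothety_iterate_of_escape hc hr0 hr1 hb.le (hEB (mem_insert c E)) hB
    (fun y hy hyB => hstep y ⟨hy, hnotE fun h => hyB (hB h)⟩ (hnotE hyB))
    (fun x hx => hbase x ⟨hx.1, hnotE hx.2⟩) m hy hxB
  rw [div_lt_iff₀ hb] at hm
  linarith

theorem neg_sum_abs_le_sign_mul {ι : Type*} {s : Finset ι} {u : ι → ℝ} {j : ι} (hj : j ∈ s)
    (r : ℝ) : -∑ i ∈ s, |u i| ≤ Real.sign r * u j := by
  refine (neg_le_neg (Finset.single_le_sum (fun i _ => abs_nonneg (u i)) hj)).trans ?_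
  rcases Real.sign_apply_eq r with h | h | h <;> simp [h, neg_abs_le, le_abs_self]

section SelfSimilar

variable {n : ℕ} {a d β : ℕ → ℝ} {f : ℝ → ℝ}

theorem simOp_eq_of_mem_Ioo (ha : ∀ k ∈ Finset.Icc 1 n, 0 ≤ a k) {k : ℕ}
    (hk : k ∈ Finset.Icc 1 n) {x : ℝ} (hx : x ∈ Ioo (alphaOf a k) (alphaOf a (k + 1))) :
    simOp n a d β f x = β k + d k * f ((x - alphaOf a k) / a k) := by
  rw [simOp, Finset.sum_eq_single_of_mem k hk, indicator_of_mem hx]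
  intro j hj hjk
  refine indicator_of_notMem (fun hxj => ?_) _
  have hj' := Finset.mem_Icc.mp hj
  have hk' := Finset.mem_Icc.mp hk
  rcases hjk.lt_or_gt with h | h
  · linarith [hx.1, hxj.2, alphaOf_le_alphaOf ha (show j + 1 ≤ k by omega) (by omega)]
  · linarith [hx.2, hxj.1, alphaOf_le_alphaOf ha (show k + 1 ≤ j by omega) (by omega)]

theorem homothety_alphaOf_div_one_sub_apply {k : ℕ} (hak : a k ≠ 1) (y : ℝ) :
    homothety (alphaOf a k / (1 - a k)) (a k) y = alphaOf a k + a k * y := by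
  rw [homothety_apply, smul_eq_mul, vsub_eq_sub, vadd_eq_add]
  field_simp [sub_ne_zero.mpr hak.symm]
  ring

theorem apply_alphaOf_add_mul_eq (ha : ∀ k ∈ Finset.Icc 1 n, 0 < a k) {k : ℕ}
    (hk : k ∈ Finset.Icc 1 n) (hdk : d k = 1) {y : ℝ} (hy : y ∈ Ioo (0 : ℝ) 1)
    (hfy : f (alphaOf a k + a k * y) = simOp n a d β f (alphaOf a k + a k * y)) :
    f (alphaOf a k + a k * y) = β k + f y := by
  have hak := ha k hk
  have hmem : alphaOf a k + a k * y ∈ Ioo (alphaOf a k) (alphaOf a (k + 1)) := by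
    rw [alphaOf_succ a (Finset.mem_Icc.mp hk).1]
    constructor <;> nlinarith [hy.1, hy.2]
  rw [hfy, simOp_eq_of_mem_Ioo (fun j hj => (ha j hj).le) hk hmem, hdk, one_mul,
    add_sub_cancel_left, mul_div_cancel_left₀ y hak.ne']

theorem apply_eq_or_exists_alphaOf_add_mul_eq (ha : ∀ k ∈ Finset.Icc 1 n, 0 < a k)
    (hsum : ∑ k ∈ Finset.Icc 1 n, a k = 1) {khat : ℕ}
    (hd0 : ∀ k ∈ Finset.Icc 1 n, k ≠ khat → d k = 0) {x : ℝ} (hx : x ∈ Icc (0 : ℝ) 1)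
    (hxα : x ∉ range (alphaOf a)) (hfx : f x = simOp n a d β f x) :
    (∃ j ∈ Finset.Icc 1 n, f x = β j) ∨
      ∃ y ∈ Icc (0 : ℝ) 1, alphaOf a khat + a khat * y = x := by
  obtain ⟨j, hj, hxj⟩ := exists_mem_Ioo_alphaOf hsum hx hxα
  rw [simOp_eq_of_mem_Ioo (fun k hk => (ha k hk).le) hj hxj] at hfx
  by_cases hjk : j = khat
  · subst hjk
    have haj := ha j hj
    rw [alphaOf_succ a (Finset.mem_Icc.mp hj).1] at hxj
    refine .inr ⟨(x - alphaOf a j) / a j, ⟨?_, ?_⟩, by field_simp; ring⟩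
    · exact div_nonneg (by linarith [hxj.1]) haj.le
    · rw [div_le_one haj]; linarith [hxj.2]
  · exact .inl ⟨j, hj, by rw [hfx, hd0 j hj hjk, zero_mul, add_zero]⟩

end SelfSimilar

theorem selfSimilar_zeroOrder_essTendsTo_infty_general
    (n : ℕ) (a d β : ℕ → ℝ)
    (ha : ∀ k ∈ Finset.Icc 1 n, 0 < a k)
    (hsum : ∑ k ∈ Finset.Icc 1 n, a k = 1)
    (p : ℝ≥0∞)
    (khat : ℕ) (hk : khat ∈ Finset.Icc 1 n)
    (hd0 : ∀ k ∈ Finset.Icc 1 n, k ≠ khat → d k = 0)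
    (hcontr : a khat * |d khat| ^ p.toReal < 1)
    (f : ℝ → ℝ)
    (hfix : f =ᵐ[volume.restrict (Set.Icc (0:ℝ) 1)] simOp n a d β f)
    (hdone : d khat = 1) (hbk : β khat ≠ 0)
    (xhat : ℝ) (hxhat : xhat = alphaOf a khat / (1 - a khat)) :
    ∀ M > (0:ℝ), ∃ δ > (0:ℝ), ∀ᵐ x ∂(volume.restrict (Set.Icc (0:ℝ) 1)),
      (0 < |x - xhat| ∧ |x - xhat| < δ) → Real.sign (β khat) * f x > M := by
  intro M _
  have ha0 := ha khat hk
  have ha1 : a khat < 1 := by simpa [hdone] using hcontr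
  have hψ : ∀ y, homothety xhat (a khat) y = alphaOf a khat + a khat * y :=
    hxhat ▸ homothety_alphaOf_div_one_sub_apply ha1.ne
  have hxhat01 : xhat ∈ Icc (0 : ℝ) 1 :=
    hxhat ▸ alphaOf_div_one_sub_mem_Icc (fun k hk => (ha k hk).le) hsum hk ha1
  set E := {x | f x ≠ simOp n a d β f x} ∩ Icc 0 1 ∪ range (alphaOf a)
  have hE : volume E = 0 := measure_union_null
    (by rwa [← Measure.restrict_apply' measurableSet_Icc]) ((countable_range _).measure_zero _)
  have hfixE : ∀ x ∈ Icc (0 : ℝ) 1, x ∉ E → f x = simOp n a d β f x :=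
    fun x hx hxE => not_not.mp fun h => hxE (.inl ⟨h, hx⟩)
  refine (exists_ae_lt_of_homothety_escape
    (g := fun x => Real.sign (β khat) * f x) (C := ∑ j ∈ Finset.Icc 1 n, |β j|)
    hxhat01 ha0 ha1 (Real.sign_mul_pos_of_ne_zero _ hbk) hE ?step ?base M).imp
    fun δ hδ => ⟨hδ.1, ?_⟩
  case step =>
    intro y hy hψy
    have hψy01 := mapsTo_homothety_Icc hxhat01 ha0.le ha1.le hy.1
    rw [hψ] at hψy hψy01 ⊢
    rw [apply_alphaOf_add_mul_eq ha hk hdone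
      (mem_Ioo_of_notMem_range_alphaOf hsum hy.1 fun h => hy.2 (.inr h)) (hfixE _ hψy01 hψy),
      mul_add]
  case base =>
    intro x hx
    simp only [hψ]
    refine (apply_eq_or_exists_alphaOf_add_mul_eq ha hsum hd0 hx.1 (fun h => hx.2 (.inr h))
      (hfixE x hx.1 hx.2)).imp_left fun ⟨j, hj, hfj⟩ => ?_
    exact hfj ▸ neg_sum_abs_le_sign_mul hj (β khat)
  filter_upwards [ae_restrict_mem measurableSet_Icc, ae_restrict_of_ae hδ.2]
    with x hx hlt hxδ
  exact hlt hx hxδ.2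

/-- if `d_{k̂} = 1` and `β_{k̂} ≠ 0`, the self-similar function of zero
spectral order tends essentially to `sign(β_{k̂})·(+∞)` at the singular point `x̂`. -/
theorem selfSimilar_zeroOrder_essTendsTo_infty
    (n : ℕ) (hn : 1 < n) (a d β : ℕ → ℝ)
    (ha : ∀ k ∈ Finset.Icc 1 n, 0 < a k)
    (hsum : ∑ k ∈ Finset.Icc 1 n, a k = 1)
    (p : ℝ≥0∞) (hp1 : 1 ≤ p) (hpt : p ≠ ⊤)
    (khat : ℕ) (hk : khat ∈ Finset.Icc 1 n)
    (hdk : d khat ≠ 0)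
    (hd0 : ∀ k ∈ Finset.Icc 1 n, k ≠ khat → d k = 0)
    (hβ : ∃ k ∈ Finset.Icc 1 n, β k ≠ 0)
    (hcontr : a khat * |d khat| ^ p.toReal < 1)
    (f : ℝ → ℝ) (hf : MemLp f p (volume.restrict (Set.Icc (0:ℝ) 1)))
    (hfix : f =ᵐ[volume.restrict (Set.Icc (0:ℝ) 1)] simOp n a d β f)
    (hdone : d khat = 1) (hbk : β khat ≠ 0)
    (xhat : ℝ) (hxhat : xhat = alphaOf a khat / (1 - a khat)) :
    ∀ M > (0:ℝ), ∃ δ > (0:ℝ), ∀ᵐ x ∂(volume.restrict (Set.Icc (0:ℝ) 1)),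
      (0 < |x - xhat| ∧ |x - xhat| < δ) → Real.sign (β khat) * f x > M :=
  selfSimilar_zeroOrder_essTendsTo_infty_general n a d β ha hsum p khat hk hd0 hcontr f hfix hdone
    hbk xhat hxhat
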